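/- arXiv:2105.01053 — 8 statements merged into one kernel-verified Lean document; each statement's English description precedes it below -/
import Mathlib

section
/- Reciprocally convex combination lemma: Let n, N be positive natural numbers, let R : Fin N → Matrix (Fin n) (Fin n) ℝ be a family of positive definite real matrices, let α : Fin N → ℝ satisfy α i > 0 for all i and ∑ i, α i = 1, and let S : Fin N → Fin N → Matrix (Fin n) (Fin n) ℝ satisfy S i i = R i for all i, S j i = (S i j)ᵀ for all i, j, and for all i ≠ j the 2n × 2n block matrix Matrix.fromBlocks (R i) (S i j) ((S i j)ᵀ) (R j) is positive semidefinite. Then for every family of vectors ϑ : Fin N → (Fin n → ℝ), ∑ i, (1 / α i) * (ϑ i ⬝ᵥ (R i).mulVec (ϑ i)) ≥ ∑ i, ∑ j, ϑ i ⬝ᵥ (S i j).mulVec (ϑ j). -/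
/-!
Testing the positive semidefinite block `[[R i, S i j], [(S i j)ᵀ, R j]]` against the vector
`(α j • ϑ i, -α i • ϑ j)` gives the weighted AM–GM bound
`2 ϑ iᵀ S i j ϑ j ≤ (α j / α i) ϑ iᵀ R i ϑ i + (α i / α j) ϑ jᵀ R j ϑ j`, which also holds with
equality for `i = j`. Summing over all pairs, the right-hand side collapses, via `∑ j, α j = 1`,
to `2 ∑ i, (1 / α i) ϑ iᵀ R i ϑ i`.
-/

open Matrix Finset

variable {m n ι : Type*} [Fintype m] [Fintype n] [Fintype ι]

theorem Matrix.dotProduct_fromBlocks_mulVec_sumElim (A : Matrix m m ℝ) (B : Matrix m n ℝ)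
    (C : Matrix n n ℝ) (x : m → ℝ) (y : n → ℝ) :
    Sum.elim x y ⬝ᵥ fromBlocks A B Bᵀ C *ᵥ Sum.elim x y =
      x ⬝ᵥ A *ᵥ x + 2 * (x ⬝ᵥ B *ᵥ y) + y ⬝ᵥ C *ᵥ y := by
  have hBt : y ⬝ᵥ Bᵀ *ᵥ x = x ⬝ᵥ B *ᵥ y := by
    rw [dotProduct_mulVec, vecMul_transpose, dotProduct_comm]
  rw [fromBlocks_mulVec, sumElim_dotProduct_sumElim, Sum.elim_comp_inl, Sum.elim_comp_inr,
    dotProduct_add, dotProduct_add, hBt]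
  ring

theorem Matrix.PosSemidef.two_mul_dotProduct_mulVec_le {A : Matrix m m ℝ} {B : Matrix m n ℝ}
    {C : Matrix n n ℝ} (h : (fromBlocks A B Bᵀ C).PosSemidef) {a b : ℝ} (ha : 0 < a)
    (hb : 0 < b) (x : m → ℝ) (y : n → ℝ) :
    2 * (x ⬝ᵥ B *ᵥ y) ≤ b / a * (x ⬝ᵥ A *ᵥ x) + a / b * (y ⬝ᵥ C *ᵥ y) := by
  have hquad := h.dotProduct_mulVec_nonneg (Sum.elim (b • x) (-(a • y)))
  rw [star_trivial, dotProduct_fromBlocks_mulVec_sumElim] at hquad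
  simp only [mulVec_neg, mulVec_smul, dotProduct_neg, neg_dotProduct, dotProduct_smul,
    smul_dotProduct, smul_eq_mul] at hquad
  rw [div_mul_eq_mul_div, div_mul_eq_mul_div, div_add_div _ _ ha.ne' hb.ne',
    le_div_iff₀ (mul_pos ha hb)]
  linarith

theorem Finset.sum_sum_le_of_two_mul_le_add_swap {t a : ι → ι → ℝ}
    (h : ∀ i j, 2 * t i j ≤ a i j + a j i) : ∑ i, ∑ j, t i j ≤ ∑ i, ∑ j, a i j := by
  have hsum : ∑ i, ∑ j, 2 * t i j ≤ ∑ i, ∑ j, (a i j + a j i) :=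
    sum_le_sum fun i _ => sum_le_sum fun j _ => h i j
  simp only [← mul_sum, sum_add_distrib] at hsum
  rw [sum_comm (f := fun i j => a j i)] at hsum
  linarith

theorem reciprocally_convex_combination_general
    (n N : ℕ)
    (R : Fin N → Matrix (Fin n) (Fin n) ℝ)
    (α : Fin N → ℝ) (hα : ∀ i, 0 < α i) (hαsum : ∑ i, α i = 1)
    (S : Fin N → Fin N → Matrix (Fin n) (Fin n) ℝ)
    (hSdiag : ∀ i, S i i = R i)
    (hSblock : ∀ i j, i ≠ j →
      (Matrix.fromBlocks (R i) (S i j) (S i j)ᵀ (R j)).PosSemidef)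
    (ϑ : Fin N → (Fin n → ℝ)) :
    ∑ i, (1 / α i) * (ϑ i ⬝ᵥ (R i).mulVec (ϑ i)) ≥
      ∑ i, ∑ j, ϑ i ⬝ᵥ (S i j).mulVec (ϑ j) := by
  have hpair : ∀ i j, 2 * (ϑ i ⬝ᵥ S i j *ᵥ ϑ j) ≤
      α j / α i * (ϑ i ⬝ᵥ R i *ᵥ ϑ i) + α i / α j * (ϑ j ⬝ᵥ R j *ᵥ ϑ j) := by
    intro i j
    rcases eq_or_ne i j with rfl | hij
    · rw [hSdiag, div_self (hα i).ne']
      linarith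
    · exact (hSblock i j hij).two_mul_dotProduct_mulVec_le (hα i) (hα j) _ _
  calc ∑ i, ∑ j, ϑ i ⬝ᵥ S i j *ᵥ ϑ j
      ≤ ∑ i, ∑ j, α j / α i * (ϑ i ⬝ᵥ R i *ᵥ ϑ i) := sum_sum_le_of_two_mul_le_add_swap hpair
    _ = ∑ i, (1 / α i) * (ϑ i ⬝ᵥ R i *ᵥ ϑ i) := by
      simp only [← sum_mul, ← sum_div, hαsum]

/-- Reciprocally convex combination lemma. -/
theorem reciprocally_convex_combination
    (n N : ℕ) (hn : 0 < n) (hN : 0 < N)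
    (R : Fin N → Matrix (Fin n) (Fin n) ℝ) (hR : ∀ i, (R i).PosDef)
    (α : Fin N → ℝ) (hα : ∀ i, 0 < α i) (hαsum : ∑ i, α i = 1)
    (S : Fin N → Fin N → Matrix (Fin n) (Fin n) ℝ)
    (hSdiag : ∀ i, S i i = R i)
    (hSsym : ∀ i j, S j i = (S i j)ᵀ)
    (hSblock : ∀ i j, i ≠ j →
      (Matrix.fromBlocks (R i) (S i j) (S i j)ᵀ (R j)).PosSemidef)
    (ϑ : Fin N → (Fin n → ℝ)) :
    ∑ i, (1 / α i) * (ϑ i ⬝ᵥ (R i).mulVec (ϑ i)) ≥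
      ∑ i, ∑ j, ϑ i ⬝ᵥ (S i j).mulVec (ϑ j) :=
  reciprocally_convex_combination_general n N R α hα hαsum S hSdiag hSblock ϑ
end

section
/- Matrix Jensen inequality: Let R be an n × n real positive semidefinite matrix, let a < b be real numbers, and let f : ℝ → (Fin n → ℝ) be continuous on [a, b]. Then (∫_{a}^{b} f(s) ds) ⬝ᵥ R.mulVec (∫_{a}^{b} f(s) ds) ≤ (b − a) * ∫_{a}^{b} f(s) ⬝ᵥ R.mulVec (f(s)) ds. -/
open Matrix MeasureTheory Set

/-! The quadratic form `q x = x ⬝ᵥ R *ᵥ x` of a positive semidefinite `R` is convex, so Jensen's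
inequality for the average over `[a, b]` gives `q ((b - a)⁻¹ • ∫ f) ≤ (b - a)⁻¹ * ∫ q ∘ f`;
since `q` is homogeneous of degree two, multiplying by `(b - a) ^ 2` gives the claim. -/

namespace Matrix

variable {ι : Type*} [Fintype ι]

theorem smul_dotProduct_mulVec_smul (R : Matrix ι ι ℝ) (c : ℝ) (x : ι → ℝ) :
    (c • x) ⬝ᵥ R *ᵥ (c • x) = c ^ 2 * (x ⬝ᵥ R *ᵥ x) := by
  simp only [mulVec_smul, smul_dotProduct, dotProduct_smul, smul_eq_mul]
  ring

/-- With `B x y = x ⬝ᵥ R *ᵥ y` and `p + q = 1`, the convexity gap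
`p B x x + q B y y - B (p x + q y) (p x + q y)` equals `p q B (x - y) (x - y)`. -/
theorem PosSemidef.convexOn_dotProduct_mulVec {R : Matrix ι ι ℝ} (hR : R.PosSemidef) :
    ConvexOn ℝ univ fun x : ι → ℝ => x ⬝ᵥ R *ᵥ x := by
  refine ⟨convex_univ, fun x _ y _ p q hp hq hpq => ?_⟩
  have hdiff := hR.dotProduct_mulVec_nonneg (x - y)
  simp only [star_trivial, mulVec_sub, sub_dotProduct, dotProduct_sub] at hdiff
  simp only [mulVec_add, mulVec_smul, add_dotProduct, dotProduct_add, smul_dotProduct,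
    dotProduct_smul, smul_eq_mul]
  obtain rfl : q = 1 - p := by linarith
  nlinarith [mul_nonneg (mul_nonneg hp hq) hdiff]

end Matrix

theorem ConvexOn.map_interval_average_le {E : Type*} [NormedAddCommGroup E] [NormedSpace ℝ E]
    [CompleteSpace E] {g : E → ℝ} (hg : ConvexOn ℝ univ g) (hgc : Continuous g) {f : ℝ → E}
    {a b : ℝ} (hab : a ≠ b) (hfi : IntervalIntegrable f volume a b)
    (hgi : IntervalIntegrable (g ∘ f) volume a b) :
    g (⨍ x in a..b, f x) ≤ ⨍ x in a..b, g (f x) := by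
  refine hg.map_set_average_le hgc.continuousOn isClosed_univ ?_ ?_
    (Filter.Eventually.of_forall fun _ => mem_univ _) hfi.def' hgi.def'
  · simpa [Real.volume_uIoc, sub_eq_zero] using hab.symm
  · simp [Real.volume_uIoc]

/-- Matrix Jensen inequality. -/
theorem matrix_jensen_inequality
    (n : ℕ) (R : Matrix (Fin n) (Fin n) ℝ) (hR : R.PosSemidef)
    (a b : ℝ) (hab : a < b)
    (f : ℝ → (Fin n → ℝ)) (hf : ContinuousOn f (Set.Icc a b)) :
    (∫ s in a..b, f s) ⬝ᵥ R.mulVec (∫ s in a..b, f s) ≤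
      (b - a) * ∫ s in a..b, (f s ⬝ᵥ R.mulVec (f s)) := by
  have hqc : Continuous fun x : Fin n → ℝ => x ⬝ᵥ R *ᵥ x := by fun_prop
  have hjensen := hR.convexOn_dotProduct_mulVec.map_interval_average_le hqc hab.ne
    (hf.intervalIntegrable_of_Icc hab.le)
    ((hqc.comp_continuousOn hf).intervalIntegrable_of_Icc hab.le)
  rw [interval_average_eq, interval_average_eq, smul_dotProduct_mulVec_smul, smul_eq_mul]
    at hjensen
  have hlen : 0 < b - a := sub_pos.2 hab
  rw [inv_pow, ← div_eq_inv_mul, ← div_eq_inv_mul, div_le_div_iff₀ (by positivity) hlen] at hjensen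
  nlinarith
end

section
/- Split-interval Jensen bound: Let R be an n × n real positive semidefinite matrix, let ζ : ℝ → (Fin n → ℝ) be continuously differentiable, let t ∈ ℝ and let 0 < τ < τ̄. Set ϑ₁ = ζ(t) − ζ(t − τ) and ϑ₂ = ζ(t − τ) − ζ(t − τ̄). Then τ̄ * ∫_{t − τ̄}^{t} ζ'(s) ⬝ᵥ R.mulVec (ζ'(s)) ds ≥ (τ̄ / τ) * (ϑ₁ ⬝ᵥ R.mulVec ϑ₁) + (τ̄ / (τ̄ − τ)) * (ϑ₂ ⬝ᵥ R.mulVec ϑ₂). -/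
/-!
On an interval `[a, b]`, positive semidefiniteness gives `(x - y)ᵀ R (x - y) ≥ 0`, i.e.
`2 xᵀ R y - yᵀ R y ≤ xᵀ R x`. Taking `x = (b - a) ζ'(s)` and `y = ϑ := ζ b - ζ a` and integrating
over `[a, b]` yields Jensen's inequality `ϑᵀ R ϑ ≤ (b - a) ∫ₐᵇ ζ'ᵀ R ζ'`.
Apply it on `[t - τ̄, t - τ]` and `[t - τ, t]`, multiply by `τ̄ / (b - a)` and add.
-/

open Matrix intervalIntegral

theorem Matrix.PosSemidef.two_mul_dotProduct_mulVec_sub_le {ι : Type*} [Fintype ι]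
    {R : Matrix ι ι ℝ} (hR : R.PosSemidef) (x y : ι → ℝ) :
    2 * (x ⬝ᵥ R *ᵥ y) - y ⬝ᵥ R *ᵥ y ≤ x ⬝ᵥ R *ᵥ x := by
  have hsymm : y ⬝ᵥ R *ᵥ x = x ⬝ᵥ R *ᵥ y := by
    rw [← dotProduct_transpose_mulVec, ← conjTranspose_eq_transpose_of_trivial, hR.isHermitian.eq]
  have := hR.dotProduct_mulVec_nonneg (x - y)
  simp only [star_trivial, mulVec_sub, sub_dotProduct, dotProduct_sub] at this
  linarith

theorem integral_dotProduct_eq_sub {ι : Type*} [Fintype ι] {f f' : ℝ → ι → ℝ}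
    (hf : ∀ s, HasDerivAt f (f' s) s) (hf' : Continuous f') (w : ι → ℝ) (a b : ℝ) :
    ∫ s in a..b, f' s ⬝ᵥ w = f b ⬝ᵥ w - f a ⬝ᵥ w :=
  integral_eq_sub_of_hasDerivAt
    (fun s _ => HasDerivAt.fun_sum fun i _ => (hasDerivAt_pi.1 (hf s) i).mul_const (w i))
    ((hf'.dotProduct continuous_const).intervalIntegrable a b)

theorem dotProduct_mulVec_sub_le_mul_integral {ι : Type*} [Fintype ι]
    {R : Matrix ι ι ℝ} (hR : R.PosSemidef) {ζ ζ' : ℝ → ι → ℝ}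
    (hζ : ∀ s, HasDerivAt ζ (ζ' s) s) (hζ' : Continuous ζ') {a b : ℝ} (hab : a ≤ b) :
    (ζ b - ζ a) ⬝ᵥ R *ᵥ (ζ b - ζ a) ≤ (b - a) * ∫ s in a..b, ζ' s ⬝ᵥ R *ᵥ ζ' s := by
  rcases hab.eq_or_lt with rfl | hlt
  · simp
  set v := ζ b - ζ a
  set c := b - a
  have hc : 0 < c := sub_pos.2 hlt
  have hpoint : ∀ s, 2 * c * (ζ' s ⬝ᵥ R *ᵥ v) - v ⬝ᵥ R *ᵥ v ≤ c ^ 2 * (ζ' s ⬝ᵥ R *ᵥ ζ' s) := by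
    intro s
    have := hR.two_mul_dotProduct_mulVec_sub_le (c • ζ' s) v
    simpa [mulVec_smul, smul_dotProduct, dotProduct_smul, mul_assoc, sq] using this
  have hlhs : ∫ s in a..b, (2 * c * (ζ' s ⬝ᵥ R *ᵥ v) - v ⬝ᵥ R *ᵥ v) = c * (v ⬝ᵥ R *ᵥ v) := by
    rw [integral_sub, integral_const_mul, integral_dotProduct_eq_sub hζ hζ', integral_const]
    · rw [← sub_dotProduct, smul_eq_mul]; ring
    · exact ((continuous_const.mul (hζ'.dotProduct continuous_const))).intervalIntegrable a b
    · exact intervalIntegrable_const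
  have hcont : Continuous fun s => ζ' s ⬝ᵥ R *ᵥ ζ' s :=
    hζ'.dotProduct (continuous_const.matrix_mulVec hζ')
  refine le_of_mul_le_mul_left ?_ hc
  calc c * (v ⬝ᵥ R *ᵥ v)
      = ∫ s in a..b, (2 * c * (ζ' s ⬝ᵥ R *ᵥ v) - v ⬝ᵥ R *ᵥ v) := hlhs.symm
    _ ≤ ∫ s in a..b, c ^ 2 * (ζ' s ⬝ᵥ R *ᵥ ζ' s) :=
        integral_mono_on hlt.le (((continuous_const.mul (hζ'.dotProduct continuous_const)).sub
          continuous_const).intervalIntegrable a b)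
          ((continuous_const.mul hcont).intervalIntegrable a b) fun s _ => hpoint s
    _ = c * (c * ∫ s in a..b, ζ' s ⬝ᵥ R *ᵥ ζ' s) := by rw [integral_const_mul]; ring

/-- Split-interval Jensen bound. -/
theorem split_interval_jensen_bound
    (n : ℕ) (R : Matrix (Fin n) (Fin n) ℝ) (hR : R.PosSemidef)
    (ζ ζ' : ℝ → (Fin n → ℝ))
    (hζ : ∀ s : ℝ, HasDerivAt ζ (ζ' s) s) (hζ' : Continuous ζ')
    (t τ τbar : ℝ) (hτ : 0 < τ) (hττ : τ < τbar) :
    τbar * ∫ s in (t - τbar)..t, (ζ' s ⬝ᵥ R.mulVec (ζ' s)) ≥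
      (τbar / τ) * ((ζ t - ζ (t - τ)) ⬝ᵥ R.mulVec (ζ t - ζ (t - τ))) +
        (τbar / (τbar - τ)) *
          ((ζ (t - τ) - ζ (t - τbar)) ⬝ᵥ R.mulVec (ζ (t - τ) - ζ (t - τbar))) := by
  have hq : Continuous fun s => ζ' s ⬝ᵥ R *ᵥ ζ' s :=
    hζ'.dotProduct (continuous_const.matrix_mulVec hζ')
  have hrecent := dotProduct_mulVec_sub_le_mul_integral hR hζ hζ' (a := t - τ) (b := t)
    (by linarith)
  have hpast := dotProduct_mulVec_sub_le_mul_integral hR hζ hζ' (a := t - τbar) (b := t - τ)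
    (by linarith)
  rw [sub_sub_cancel] at hrecent
  rw [sub_sub_sub_cancel_left] at hpast
  have hscale (c ϑ I : ℝ) (hc : 0 < c) (h : ϑ ≤ c * I) : τbar / c * ϑ ≤ τbar * I :=
    calc τbar / c * ϑ ≤ τbar / c * (c * I) :=
        mul_le_mul_of_nonneg_left h (div_nonneg (by linarith) hc.le)
      _ = τbar * I := by field_simp
  rw [← integral_add_adjacent_intervals (hq.intervalIntegrable (t - τbar) (t - τ))
    (hq.intervalIntegrable _ t), mul_add, add_comm]
  exact add_le_add (hscale _ _ _ hτ hrecent) (hscale _ _ _ (sub_pos.2 hττ) hpast)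
end

section
/- Integral bound via a coupling matrix: Let R and S₁₂ be n × n real matrices with R positive semidefinite, and suppose the 2n × 2n block matrix Matrix.fromBlocks R S₁₂ S₁₂ᵀ R is positive semidefinite. Let ζ : ℝ → (Fin n → ℝ) be continuously differentiable, let t ∈ ℝ, let 0 ≤ τ ≤ τ̄ with τ̄ > 0, and set ϑ₁ = ζ(t) − ζ(t − τ), ϑ₂ = ζ(t − τ) − ζ(t − τ̄). Then τ̄ * ∫_{t − τ̄}^{t} ζ'(s) ⬝ᵥ R.mulVec (ζ'(s)) ds ≥ ϑ₁ ⬝ᵥ R.mulVec ϑ₁ + 2 * (ϑ₁ ⬝ᵥ S₁₂.mulVec ϑ₂) + ϑ₂ ⬝ᵥ R.mulVec ϑ₂. -/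
/-!
Split `[t - τbar, t]` at `t - τ`. On each piece, Jensen's inequality for the quadratic form of `R`
bounds `ϑᵢᵀ R ϑᵢ` by the length of the piece times the integral over it, so the left-hand side
dominates `(α + β) (ϑ₁ᵀ R ϑ₁ / α + ϑ₂ᵀ R ϑ₂ / β)` with `α = τ`, `β = τbar - τ`. Evaluating the
positive semidefinite block form at `(β ϑ₁, -α ϑ₂)` gives
`2 αβ ϑ₁ᵀ S₁₂ ϑ₂ ≤ β² ϑ₁ᵀ R ϑ₁ + α² ϑ₂ᵀ R ϑ₂`, which is exactly what is needed
(reciprocal convexity).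
-/

open Matrix intervalIntegral

namespace Matrix

variable {ι κ : Type*} [Fintype ι] [Fintype κ]

theorem PosSemidef.two_mul_dotProduct_mulVec_le_s3 {R : Matrix ι ι ℝ} (hR : R.PosSemidef)
    (u w : ι → ℝ) : 2 * (u ⬝ᵥ R *ᵥ w) ≤ u ⬝ᵥ R *ᵥ u + w ⬝ᵥ R *ᵥ w := by
  have h := hR.dotProduct_mulVec_nonneg (u - w)
  have hsymm : w ⬝ᵥ R *ᵥ u = u ⬝ᵥ R *ᵥ w := by
    have hRt : Rᵀ = R := by simpa [conjTranspose_eq_transpose_of_trivial] using hR.isHermitian.eq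
    conv_lhs => rw [← hRt]
    rw [dotProduct_mulVec, vecMul_transpose, dotProduct_comm]
  simp only [star_trivial, mulVec_sub, dotProduct_sub, sub_dotProduct] at h
  linarith

theorem two_mul_dotProduct_mulVec_le_of_fromBlocks {A : Matrix ι ι ℝ} {B : Matrix κ κ ℝ}
    {S : Matrix ι κ ℝ} (hblock : (fromBlocks A S Sᵀ B).PosSemidef) (u : ι → ℝ) (v : κ → ℝ) :
    2 * (u ⬝ᵥ S *ᵥ v) ≤ u ⬝ᵥ A *ᵥ u + v ⬝ᵥ B *ᵥ v := by
  have h := hblock.dotProduct_mulVec_nonneg (Sum.elim u (-v))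
  simp only [star_trivial, fromBlocks_mulVec, sumElim_dotProduct_sumElim, Sum.elim_comp_inl,
    Sum.elim_comp_inr, mulVec_neg, dotProduct_add, dotProduct_neg, neg_dotProduct, neg_neg] at h
  have hst : v ⬝ᵥ Sᵀ *ᵥ u = u ⬝ᵥ S *ᵥ v := by
    rw [dotProduct_mulVec, vecMul_transpose, dotProduct_comm]
  linarith

theorem dotProduct_mulVec_add_le_of_fromBlocks {A : Matrix ι ι ℝ} {B : Matrix κ κ ℝ}
    {S : Matrix ι κ ℝ} (hblock : (fromBlocks A S Sᵀ B).PosSemidef) {α β : ℝ} (hα : 0 < α)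
    (hβ : 0 < β) (u : ι → ℝ) (v : κ → ℝ) :
    u ⬝ᵥ A *ᵥ u + 2 * (u ⬝ᵥ S *ᵥ v) + v ⬝ᵥ B *ᵥ v ≤
      (α + β) * (u ⬝ᵥ A *ᵥ u / α + v ⬝ᵥ B *ᵥ v / β) := by
  have h := two_mul_dotProduct_mulVec_le_of_fromBlocks hblock (β • u) (α • v)
  simp only [mulVec_smul, dotProduct_smul, smul_dotProduct, smul_eq_mul] at h
  rw [div_add_div _ _ hα.ne' hβ.ne', mul_div_assoc', le_div_iff₀ (mul_pos hα hβ)]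
  nlinarith

theorem PosSemidef.dotProduct_mulVec_integral_le {R : Matrix ι ι ℝ} (hR : R.PosSemidef)
    {f : ℝ → ι → ℝ} (hf : Continuous f) {a b : ℝ} (hab : a ≤ b) :
    (∫ s in a..b, f s) ⬝ᵥ R *ᵥ (∫ s in a..b, f s) ≤ (b - a) * ∫ s in a..b, f s ⬝ᵥ R *ᵥ f s := by
  obtain rfl | hlt := hab.eq_or_lt
  · simp
  set v := ∫ s in a..b, f s
  set L := b - a
  have hQ : Continuous fun s => f s ⬝ᵥ R *ᵥ f s := by fun_prop
  have hv : v ⬝ᵥ R *ᵥ v = ∫ s in a..b, v ⬝ᵥ R *ᵥ f s :=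
    ((LinearMap.toContinuousLinearMap ((dotProductBilin ℝ ℝ v).comp R.mulVecLin)
      ).intervalIntegral_comp_comm (hf.intervalIntegrable a b)).symm
  -- Integrating the polarization inequality for `v` and `L • f s` against `hv` yields
  -- `2 L vᵀRv ≤ L vᵀRv + L² ∫ fᵀRf`; no square root of `R` is needed.
  have hpt : ∀ s, 2 * L * (v ⬝ᵥ R *ᵥ f s) ≤ v ⬝ᵥ R *ᵥ v + L ^ 2 * (f s ⬝ᵥ R *ᵥ f s) := by
    intro s
    have := hR.two_mul_dotProduct_mulVec_le_s3 v (L • f s)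
    simp only [mulVec_smul, dotProduct_smul, smul_dotProduct, smul_eq_mul] at this
    linarith
  have hint : ∫ s in a..b, 2 * L * (v ⬝ᵥ R *ᵥ f s) ≤
      ∫ s in a..b, (v ⬝ᵥ R *ᵥ v + L ^ 2 * (f s ⬝ᵥ R *ᵥ f s)) :=
    integral_mono_on hab (Continuous.intervalIntegrable (by fun_prop) a b)
      (Continuous.intervalIntegrable (by fun_prop) a b) fun s _ => hpt s
  rw [integral_const_mul, ← hv, integral_add intervalIntegrable_const
    ((hQ.intervalIntegrable a b).const_mul _), integral_const, integral_const_mul,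
    smul_eq_mul] at hint
  have hLpos : 0 < L := sub_pos.2 hlt
  nlinarith

theorem PosSemidef.dotProduct_mulVec_sub_le_integral {R : Matrix ι ι ℝ} (hR : R.PosSemidef)
    {ζ ζ' : ℝ → ι → ℝ} (hζ : ∀ s, HasDerivAt ζ (ζ' s) s) (hζ' : Continuous ζ') {a b : ℝ}
    (hab : a ≤ b) :
    (ζ b - ζ a) ⬝ᵥ R *ᵥ (ζ b - ζ a) ≤ (b - a) * ∫ s in a..b, ζ' s ⬝ᵥ R *ᵥ ζ' s := by
  simpa only [integral_eq_sub_of_hasDerivAt (fun s _ => hζ s) (hζ'.intervalIntegrable a b)]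
    using hR.dotProduct_mulVec_integral_le hζ' hab

end Matrix

theorem integral_bound_via_coupling_matrix_general
    (n : ℕ) (R S₁₂ : Matrix (Fin n) (Fin n) ℝ) (hR : R.PosSemidef)
    (hblock : (Matrix.fromBlocks R S₁₂ S₁₂ᵀ R).PosSemidef)
    (ζ ζ' : ℝ → (Fin n → ℝ))
    (hζ : ∀ s : ℝ, HasDerivAt ζ (ζ' s) s) (hζ' : Continuous ζ')
    (t τ τbar : ℝ) (hτ0 : 0 ≤ τ) (hττ : τ ≤ τbar) :
    τbar * ∫ s in (t - τbar)..t, (ζ' s ⬝ᵥ R.mulVec (ζ' s)) ≥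
      (ζ t - ζ (t - τ)) ⬝ᵥ R.mulVec (ζ t - ζ (t - τ)) +
        2 * ((ζ t - ζ (t - τ)) ⬝ᵥ S₁₂.mulVec (ζ (t - τ) - ζ (t - τbar))) +
        (ζ (t - τ) - ζ (t - τbar)) ⬝ᵥ R.mulVec (ζ (t - τ) - ζ (t - τbar)) := by
  have increment {a b : ℝ} (hab : a ≤ b) := hR.dotProduct_mulVec_sub_le_integral hζ hζ' hab
  obtain rfl | hτ0 := hτ0.eq_or_lt
  · simpa using increment (show t - τbar ≤ t by linarith)
  obtain rfl | hττ := hττ.eq_or_lt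
  · simpa using increment (show t - τ ≤ t by linarith)
  have h₁ := increment (show t - τ ≤ t by linarith)
  have h₂ := increment (show t - τbar ≤ t - τ by linarith)
  rw [sub_sub_cancel, ← div_le_iff₀' hτ0] at h₁
  rw [sub_sub_sub_cancel_left, ← div_le_iff₀' (sub_pos.2 hττ)] at h₂
  have hQ : Continuous fun s => ζ' s ⬝ᵥ R *ᵥ ζ' s := by fun_prop
  rw [← integral_add_adjacent_intervals (hQ.intervalIntegrable _ (t - τ))
    (hQ.intervalIntegrable _ _), ge_iff_le]
  calc _ ≤ (τ + (τbar - τ)) * (_ / τ + _ / (τbar - τ)) :=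
        dotProduct_mulVec_add_le_of_fromBlocks hblock hτ0 (sub_pos.2 hττ) _ _
    _ ≤ τbar * _ := by
        rw [add_sub_cancel]
        exact mul_le_mul_of_nonneg_left (by linarith) (by linarith)

/-- Integral bound via a coupling matrix. -/
theorem integral_bound_via_coupling_matrix
    (n : ℕ) (R S₁₂ : Matrix (Fin n) (Fin n) ℝ) (hR : R.PosSemidef)
    (hblock : (Matrix.fromBlocks R S₁₂ S₁₂ᵀ R).PosSemidef)
    (ζ ζ' : ℝ → (Fin n → ℝ))
    (hζ : ∀ s : ℝ, HasDerivAt ζ (ζ' s) s) (hζ' : Continuous ζ')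
    (t τ τbar : ℝ) (hτ0 : 0 ≤ τ) (hττ : τ ≤ τbar) (hτbar : 0 < τbar) :
    τbar * ∫ s in (t - τbar)..t, (ζ' s ⬝ᵥ R.mulVec (ζ' s)) ≥
      (ζ t - ζ (t - τ)) ⬝ᵥ R.mulVec (ζ t - ζ (t - τ)) +
        2 * ((ζ t - ζ (t - τ)) ⬝ᵥ S₁₂.mulVec (ζ (t - τ) - ζ (t - τbar))) +
        (ζ (t - τ) - ζ (t - τbar)) ⬝ᵥ R.mulVec (ζ (t - τ) - ζ (t - τbar)) :=
  integral_bound_via_coupling_matrix_general n R S₁₂ hR hblock ζ ζ' hζ hζ' t τ τbar hτ0 hττ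
end

section
/- Polynomial bound on the matrix exponential for a spectrum in the closed left half-plane: Let A be an n × n real matrix such that every complex root λ of its characteristic polynomial (equivalently, every eigenvalue of A viewed as a complex matrix) satisfies Re λ ≤ 0. Then there exists a real polynomial Γ such that ‖Matrix.exp(t • A)‖ ≤ Γ(t) for all t ≥ 0. -/
/-!
Over `ℂ` the characteristic polynomial splits as `∏ (X - μᵢ)` with `Re μᵢ ≤ 0`, so by
Cayley–Hamilton `∏ (A - μᵢ) = 0`. Factors are peeled off one at a time: if `‖e^{sA} (A - μ) p‖`
is bounded by a polynomial of degree `k`, then differentiating `s ↦ e^{μ(t-s)} e^{sA} p` on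
`[0, t]` and using `|e^{μ(t-s)}| ≤ 1` bounds `‖e^{tA} p‖` by a polynomial of degree `k + 1`.
Since the norm of a real matrix equals that of its complexification, this bounds `‖e^{tA}‖`.
-/

open Matrix Polynomial

attribute [local instance] Matrix.frobeniusNormedAddCommGroup Matrix.frobeniusNormedRing

open NormedSpace Set

section BanachAlgebra

variable {𝔸 : Type*} [NormedRing 𝔸] [NormedAlgebra ℂ 𝔸] [CompleteSpace 𝔸]

theorem norm_cexp_mul_ofReal_le_one {μ : ℂ} (hμ : μ.re ≤ 0) {r : ℝ} (hr : 0 ≤ r) :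
    ‖Complex.exp (μ * r)‖ ≤ 1 := by
  rw [Complex.norm_exp, Complex.re_mul_ofReal, Real.exp_le_one_iff]
  exact mul_nonpos_of_nonpos_of_nonneg hμ hr

theorem hasDerivAt_cexp_smul_exp_smul_mul (b p : 𝔸) (μ : ℂ) (t s : ℝ) :
    HasDerivAt (fun s : ℝ => Complex.exp (μ * ↑(t - s)) • (exp (s • b) * p))
      (Complex.exp (μ * ↑(t - s)) • (exp (s • b) * ((b - algebraMap ℂ 𝔸 μ) * p))) s := by
  have hscalar : HasDerivAt (fun s : ℝ => Complex.exp (μ * ↑(t - s)))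
      (Complex.exp (μ * ↑(t - s)) * -μ) s := by
    simpa using (((hasDerivAt_id s).const_sub t).ofReal_comp.const_mul μ).cexp
  have hexp : HasDerivAt (fun s : ℝ => exp (s • b) * p) (exp (s • b) * b * p) s :=
    (hasDerivAt_exp_smul_const b s).mul_const p
  refine (hscalar.smul hexp).congr_deriv ?_
  rw [sub_mul, mul_sub, ← Algebra.smul_def, mul_smul_comm, mul_assoc]
  module

theorem norm_exp_smul_mul_le_of_norm_exp_smul_mul_sub_le {b p : 𝔸} {μ : ℂ} (hμ : μ.re ≤ 0)
    {t C : ℝ} (ht : 0 ≤ t)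
    (hC : ∀ s ∈ Icc 0 t, ‖exp (s • b) * ((b - algebraMap ℂ 𝔸 μ) * p)‖ ≤ C) :
    ‖exp (t • b) * p‖ ≤ ‖p‖ + C * t := by
  set F := fun s : ℝ => Complex.exp (μ * ↑(t - s)) • (exp (s • b) * p)
  have hderiv_le : ∀ s ∈ Ico 0 t, ‖Complex.exp (μ * ↑(t - s)) •
      (exp (s • b) * ((b - algebraMap ℂ 𝔸 μ) * p))‖ ≤ C := fun s hs => by
    rw [norm_smul]
    exact (mul_le_of_le_one_left (norm_nonneg _)
      (norm_cexp_mul_ofReal_le_one hμ (by linarith [hs.2]))).trans (hC s (Ico_subset_Icc_self hs))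
  have hmvt := norm_image_sub_le_of_norm_deriv_le_segment'
    (fun s _ => (hasDerivAt_cexp_smul_exp_smul_mul b p μ t s).hasDerivWithinAt) hderiv_le t
    (right_mem_Icc.2 ht)
  have hFt : F t = exp (t • b) * p := by simp [F]
  have hF0 : ‖F 0‖ ≤ ‖p‖ := by
    simp only [F, zero_smul, exp_zero, one_mul, norm_smul]
    exact mul_le_of_le_one_left (norm_nonneg _) (norm_cexp_mul_ofReal_le_one hμ (by simpa))
  calc ‖exp (t • b) * p‖ = ‖(F t - F 0) + F 0‖ := by rw [sub_add_cancel, hFt]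
    _ ≤ C * (t - 0) + ‖p‖ := (norm_add_le _ _).trans (add_le_add hmvt hF0)
    _ = ‖p‖ + C * t := by ring

theorem exists_norm_exp_smul_mul_le_of_aeval_prod_mul_eq_zero (b : 𝔸) {s : Multiset ℂ}
    (hs : ∀ μ ∈ s, μ.re ≤ 0) {p : 𝔸} (hp : aeval b (s.map fun μ => X - C μ).prod * p = 0) :
    ∃ (c : ℝ) (k : ℕ), 0 ≤ c ∧ ∀ t : ℝ, 0 ≤ t → ‖exp (t • b) * p‖ ≤ c * (1 + t) ^ k := by
  induction s using Multiset.induction_on generalizing p with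
  | empty => exact ⟨0, 0, le_rfl, fun t _ => by simp_all⟩
  | cons μ s ih =>
    have hp' : aeval b (s.map fun μ => X - C μ).prod * ((b - algebraMap ℂ 𝔸 μ) * p) = 0 := by
      rwa [Multiset.map_cons, Multiset.prod_cons, mul_comm, map_mul, map_sub, aeval_X, aeval_C,
        mul_assoc] at hp
    obtain ⟨c, k, hc, hbound⟩ := ih (fun ν hν => hs ν (Multiset.mem_cons_of_mem hν)) hp'
    refine ⟨‖p‖ + c, k + 1, by positivity, fun t ht => ?_⟩
    have hmono : ∀ s ∈ Icc 0 t, ‖exp (s • b) * ((b - algebraMap ℂ 𝔸 μ) * p)‖ ≤ c * (1 + t) ^ k :=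
      fun s hs => (hbound s hs.1).trans (by gcongr <;> linarith [hs.1, hs.2])
    have hone : 1 ≤ (1 + t) ^ (k + 1) := one_le_pow₀ (by linarith)
    calc ‖exp (t • b) * p‖
        ≤ ‖p‖ + c * (1 + t) ^ k * t :=
          norm_exp_smul_mul_le_of_norm_exp_smul_mul_sub_le (hs μ (Multiset.mem_cons_self μ s))
            ht hmono
      _ ≤ ‖p‖ * (1 + t) ^ (k + 1) + c * (1 + t) ^ k * (1 + t) := by
          gcongr
          · exact le_mul_of_one_le_right (norm_nonneg p) hone
          · linarith
      _ = (‖p‖ + c) * (1 + t) ^ (k + 1) := by ring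

theorem exists_norm_exp_smul_le_of_aeval_eq_zero (b : 𝔸) {q : ℂ[X]} (hq : q ≠ 0)
    (hroots : ∀ μ ∈ q.roots, μ.re ≤ 0) (hb : aeval b q = 0) :
    ∃ (c : ℝ) (k : ℕ), 0 ≤ c ∧ ∀ t : ℝ, 0 ≤ t → ‖exp (t • b)‖ ≤ c * (1 + t) ^ k := by
  have hprod : aeval b (q.roots.map fun μ => X - C μ).prod * 1 = 0 := by
    rw [(IsAlgClosed.splits q).eq_prod_roots, map_mul, aeval_C, ← Algebra.smul_def,
      smul_eq_zero] at hb
    simpa [leadingCoeff_ne_zero.2 hq] using hb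
  simpa using exists_norm_exp_smul_mul_le_of_aeval_prod_mul_eq_zero b hroots hprod

end BanachAlgebra

attribute [local instance] Matrix.frobeniusNormedAlgebra

theorem Matrix.frobenius_norm_exp_map_ofReal {m : Type*} [Fintype m] [DecidableEq m]
    (A : Matrix m m ℝ) : ‖exp (A.map (algebraMap ℝ ℂ))‖ = ‖exp A‖ := by
  have hcont : Continuous ((algebraMap ℝ ℂ).mapMatrix : Matrix m m ℝ →+* Matrix m m ℂ) :=
    continuous_id.matrix_map Complex.continuous_ofReal
  calc ‖exp (A.map (algebraMap ℝ ℂ))‖ = ‖(exp A).map (algebraMap ℝ ℂ)‖ :=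
        congrArg norm (map_exp _ hcont A).symm
    _ = ‖exp A‖ := frobenius_norm_map_eq _ _ fun a => Complex.norm_real a

/-- Polynomial bound on the matrix exponential when the spectrum lies in the
closed left half-plane. -/
theorem matrix_exp_poly_bound_of_spectrum_re_nonpos
    (n : ℕ) (A : Matrix (Fin n) (Fin n) ℝ)
    (hA : ∀ lam : ℂ, (A.charpoly.map (algebraMap ℝ ℂ)).IsRoot lam → lam.re ≤ 0) :
    ∃ Γ : Polynomial ℝ, ∀ t : ℝ, 0 ≤ t →
      ‖NormedSpace.exp (t • A)‖ ≤ Γ.eval t := by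
  set B := A.map (algebraMap ℝ ℂ)
  have hroots : ∀ μ ∈ B.charpoly.roots, μ.re ≤ 0 := fun μ hμ =>
    hA μ (charpoly_map A (algebraMap ℝ ℂ) ▸ isRoot_of_mem_roots hμ)
  obtain ⟨c, k, -, hbound⟩ := exists_norm_exp_smul_le_of_aeval_eq_zero B
    B.charpoly_monic.ne_zero hroots (aeval_self_charpoly B)
  refine ⟨C c * (1 + X) ^ k, fun t ht => ?_⟩
  have hmap : (t • A).map (algebraMap ℝ ℂ) = t • B := by ext; simp [B]
  rw [← frobenius_norm_exp_map_ofReal, hmap]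
  refine (hbound t ht).trans_eq ?_
  simp
end

section
/- Marginal stability under the simple-imaginary-eigenvalue condition (Assumption 5): Let A₀ be an n × n real matrix such that every complex root λ of its characteristic polynomial satisfies either Re λ < 0, or Re λ = 0 and λ is a simple root (its root multiplicity in the complexified characteristic polynomial equals 1). Then the family t ↦ Matrix.exp(t • A₀) is bounded on t ≥ 0, i.e. there exists C such that ‖Matrix.exp(t • A₀)‖ ≤ C for all t ≥ 0. -/
/-!
Complexify `A₀`. Then `ℂⁿ` is the sum of the generalized eigenspaces of `A₀`, and if
`(A₀ - μ)ᵏ x = 0` then `exp (t A₀) x = e^{tμ} ∑_{j<k} tʲ/j! (A₀ - μ)ʲ x`.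
For `Re μ < 0` the exponential factor beats the polynomial one, while for `Re μ = 0` the
simple-root hypothesis makes the generalized eigenspace an honest eigenspace, on which
`exp (t A₀)` acts by the unimodular scalar `e^{tμ}`. So every orbit `t ↦ exp (t A₀) x` is
bounded, and in finite dimension this bounds the family of matrices itself.
-/

open Matrix Polynomial NormedSpace Finset
open scoped Nat

attribute [local instance] Matrix.frobeniusNormedAddCommGroup Matrix.frobeniusNormedRing
  Matrix.frobeniusNormedAlgebra

theorem Module.End.maxGenEigenspace_eq_eigenspace_of_rootMultiplicity_eq_one {K V : Type*}
    [Field K] [AddCommGroup V] [Module K V] [FiniteDimensional K V] {f : End K V} {μ : K}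
    (h : f.charpoly.rootMultiplicity μ = 1) : f.maxGenEigenspace μ = f.eigenspace μ := by
  have hroot : f.charpoly.IsRoot μ :=
    (rootMultiplicity_pos f.charpoly_monic.ne_zero).1 (h ▸ Nat.one_pos)
  refine (Submodule.eq_of_le_of_finrank_le eigenspace_le_maxGenEigenspace ?_).symm
  rw [LinearMap.finrank_maxGenEigenspace_eq, h, Submodule.one_le_finrank_iff]
  exact (hasEigenvalue_iff_isRoot_charpoly f μ).2 hroot

namespace Matrix

section Exp

variable {m 𝕂 : Type*} [Fintype m] [DecidableEq m] [RCLike 𝕂]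

theorem exp_eq_exp_smul_exp_sub_smul_one (M : Matrix m m 𝕂) (μ : 𝕂) :
    exp M = exp μ • exp (M - μ • 1) := by
  have hcomm : Commute (μ • (1 : Matrix m m 𝕂)) (M - μ • 1) := (Commute.one_left _).smul_left μ
  conv_lhs => rw [← add_sub_cancel (μ • (1 : Matrix m m 𝕂)) M]
  rw [exp_add_of_commute _ _ hcomm, ← Algebra.algebraMap_eq_smul_one, Algebra.smul_def]
  exact congrArg (· * _) (algebraMap_exp_comm μ).symm

theorem exp_mulVec_eq_sum_of_pow_mulVec_eq_zero {N : Matrix m m 𝕂} {x : m → 𝕂} {k : ℕ}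
    (hx : N ^ k *ᵥ x = 0) :
    exp N *ᵥ x = ∑ j ∈ range k, (j !⁻¹ : 𝕂) • (N ^ j *ᵥ x) := by
  have hsum : HasSum (fun j : ℕ => ((j !⁻¹ : 𝕂) • N ^ j) *ᵥ x) (exp N *ᵥ x) :=
    (exp_series_hasSum_exp' (𝕂 := 𝕂) N).map (mulVec.addMonoidHomLeft x)
      (continuous_id.matrix_mulVec continuous_const)
  simp_rw [smul_mulVec] at hsum
  refine hsum.unique (hasSum_sum_of_ne_finset_zero fun j hj => ?_)
  rw [← pow_sub_mul_pow N (not_lt.1 (mem_range.not.1 hj)), ← mulVec_mulVec, hx, mulVec_zero,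
    smul_zero]

theorem exp_map {𝕃 : Type*} [RCLike 𝕃] (f : 𝕂 →+* 𝕃) (hf : Continuous f) (A : Matrix m m 𝕂) :
    exp (A.map f) = (exp A).map f :=
  (map_exp f.mapMatrix (continuous_id.matrix_map hf) A).symm

end Exp

theorem exists_norm_le_of_forall_exists_norm_mulVec_le {ι m n α : Type*} [Fintype m]
    [Fintype n] [DecidableEq n] [NormedRing α] {X : ι → Matrix m n α}
    (h : ∀ v, ∃ C, ∀ i, ‖X i *ᵥ v‖ ≤ C) : ∃ C, ∀ i, ‖X i‖ ≤ C := by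
  have hentry : ∀ a j, ∃ C, ∀ i, ‖X i a j‖ ≤ C := fun a j =>
    (h (Pi.single j 1)).imp fun C hC i => by
      simpa only [mulVec_single_one, col_apply] using (norm_le_pi_norm _ a).trans (hC i)
  have hbdd : Bornology.IsBounded (Set.range X) := by
    refine (Bornology.IsBounded.pi fun a => Bornology.IsBounded.pi fun j =>
      isBounded_iff_forall_norm_le.2 ((hentry a j).imp fun C hC =>
        Set.forall_mem_range.2 hC)).subset ?_
    rintro _ ⟨i, rfl⟩ a - j -
    exact ⟨i, rfl⟩
  obtain ⟨C, hC⟩ := isBounded_iff_forall_norm_le.1 hbdd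
  exact ⟨C, fun i => hC _ ⟨i, rfl⟩⟩

section Complex

variable {m : Type*} [Fintype m] [DecidableEq m] {M : Matrix m m ℂ} {μ : ℂ} {x : m → ℂ}

theorem norm_exp_smul_mulVec_le {k : ℕ} (hx : (M - μ • 1) ^ k *ᵥ x = 0) {t : ℝ} (ht : 0 ≤ t) :
    ‖exp ((t : ℂ) • M) *ᵥ x‖ ≤
      Real.exp (t * μ.re) * ∑ j ∈ range k, t ^ j / j ! * ‖(M - μ • 1) ^ j *ᵥ x‖ := by
  set N := M - μ • 1
  have hsub : (t : ℂ) • M - ((t : ℂ) * μ) • 1 = (t : ℂ) • N := by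
    rw [smul_sub, smul_smul]
  have htN : ((t : ℂ) • N) ^ k *ᵥ x = 0 := by
    rw [_root_.smul_pow, smul_mulVec, hx, smul_zero]
  rw [exp_eq_exp_smul_exp_sub_smul_one _ ((t : ℂ) * μ), hsub, smul_mulVec,
    exp_mulVec_eq_sum_of_pow_mulVec_eq_zero htN, norm_smul, ← Complex.exp_eq_exp_ℂ,
    Complex.norm_exp, Complex.re_ofReal_mul]
  gcongr
  refine (norm_sum_le _ _).trans_eq (sum_congr rfl fun j _ => ?_)
  rw [_root_.smul_pow, smul_mulVec, smul_smul, norm_smul, norm_mul, norm_inv, norm_pow,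
    Complex.norm_real, Real.norm_of_nonneg ht, Complex.norm_natCast]
  ring

theorem exists_norm_exp_smul_mulVec_le_of_re_neg (hμ : μ.re < 0) {k : ℕ}
    (hx : (M - μ • 1) ^ k *ᵥ x = 0) :
    ∃ C, ∀ t : ℝ, 0 ≤ t → ‖exp ((t : ℂ) • M) *ᵥ x‖ ≤ C := by
  set ε := -μ.re
  have hε : 0 < ε := neg_pos.2 hμ
  refine ⟨∑ j ∈ range k, ‖(M - μ • 1) ^ j *ᵥ x‖ / ε ^ j, fun t ht =>
    (norm_exp_smul_mulVec_le hx ht).trans ?_⟩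
  rw [mul_sum]
  refine sum_le_sum fun j _ => ?_
  have hpow := Real.pow_div_factorial_le_exp (ε * t) (by positivity) j
  calc Real.exp (t * μ.re) * (t ^ j / j ! * ‖(M - μ • 1) ^ j *ᵥ x‖)
      = (ε * t) ^ j / j ! * Real.exp (-(ε * t)) * (‖(M - μ • 1) ^ j *ᵥ x‖ / ε ^ j) := by
        rw [mul_pow, show t * μ.re = -(ε * t) by ring]
        field_simp
    _ ≤ Real.exp (ε * t) * Real.exp (-(ε * t)) * (‖(M - μ • 1) ^ j *ᵥ x‖ / ε ^ j) := by
        gcongr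
    _ = ‖(M - μ • 1) ^ j *ᵥ x‖ / ε ^ j := by
        rw [← Real.exp_add, add_neg_cancel, Real.exp_zero, one_mul]

theorem norm_exp_smul_mulVec_le_of_mulVec_eq_smul (hμ : μ.re ≤ 0) (hx : M *ᵥ x = μ • x)
    {t : ℝ} (ht : 0 ≤ t) : ‖exp ((t : ℂ) • M) *ᵥ x‖ ≤ ‖x‖ := by
  have hx' : (M - μ • 1) ^ 1 *ᵥ x = 0 := by
    rw [pow_one, sub_mulVec, smul_mulVec, one_mulVec, hx, sub_self]
  refine (norm_exp_smul_mulVec_le hx' ht).trans ?_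
  simpa using mul_le_of_le_one_left (norm_nonneg x)
    (Real.exp_le_one_iff.2 (mul_nonpos_of_nonneg_of_nonpos ht hμ))

def IsMarginallyStable (M : Matrix m m ℂ) : Prop :=
  ∀ μ : ℂ, M.charpoly.IsRoot μ → μ.re < 0 ∨ (μ.re = 0 ∧ M.charpoly.rootMultiplicity μ = 1)

theorem exists_norm_exp_smul_mulVec_le_of_mem_maxGenEigenspace (hM : M.IsMarginallyStable)
    (hx : x ∈ Module.End.maxGenEigenspace M.toLin' μ) :
    ∃ C, ∀ t : ℝ, 0 ≤ t → ‖exp ((t : ℂ) • M) *ᵥ x‖ ≤ C := by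
  by_cases hroot : M.charpoly.IsRoot μ
  · rcases hM μ hroot with hneg | ⟨hre, hsimple⟩
    · obtain ⟨k, hk⟩ := (Module.End.mem_maxGenEigenspace _ _ _).1 hx
      refine exists_norm_exp_smul_mulVec_le_of_re_neg hneg (k := k) ?_
      rwa [← toLin'_apply, toLin'_pow, map_sub, map_smul, toLin'_one]
    · rw [← charpoly_toLin'] at hsimple
      rw [Module.End.maxGenEigenspace_eq_eigenspace_of_rootMultiplicity_eq_one hsimple,
        Module.End.mem_eigenspace_iff, toLin'_apply] at hx
      exact ⟨‖x‖, fun t ht => norm_exp_smul_mulVec_le_of_mulVec_eq_smul hre.le hx ht⟩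
  · have hbot : Module.End.maxGenEigenspace M.toLin' μ = ⊥ := Submodule.finrank_eq_zero.1 <| by
      rw [LinearMap.finrank_maxGenEigenspace_eq, charpoly_toLin', rootMultiplicity_eq_zero hroot]
    rw [hbot, Submodule.mem_bot] at hx
    exact ⟨0, by simp [hx]⟩

theorem exists_norm_exp_smul_mulVec_le (hM : M.IsMarginallyStable) (v : m → ℂ) :
    ∃ C, ∀ t : ℝ, 0 ≤ t → ‖exp ((t : ℂ) • M) *ᵥ v‖ ≤ C := by
  have hv : v ∈ ⨆ μ, Module.End.maxGenEigenspace M.toLin' μ := by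
    rw [Module.End.iSup_maxGenEigenspace_eq_top]
    trivial
  refine Submodule.iSup_induction _ (motive := fun v => ∃ C, ∀ t : ℝ, 0 ≤ t →
      ‖exp ((t : ℂ) • M) *ᵥ v‖ ≤ C) hv
    (fun μ x hx => exists_norm_exp_smul_mulVec_le_of_mem_maxGenEigenspace hM hx)
    ⟨0, by simp⟩ ?_
  rintro x y ⟨Cx, hCx⟩ ⟨Cy, hCy⟩
  refine ⟨Cx + Cy, fun t ht => ?_⟩
  rw [mulVec_add]
  exact (norm_add_le _ _).trans (add_le_add (hCx t ht) (hCy t ht))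

end Complex

end Matrix

/-- Marginal stability under the simple-imaginary-eigenvalue condition:
if every eigenvalue of `A₀` has negative real part, or zero real part and is a
simple root of the characteristic polynomial, then `t ↦ exp (t • A₀)` is bounded
on `t ≥ 0`. -/
theorem matrix_exp_bounded_of_marginally_stable
    (n : ℕ) (A₀ : Matrix (Fin n) (Fin n) ℝ)
    (hA₀ : ∀ lam : ℂ, (A₀.charpoly.map (algebraMap ℝ ℂ)).IsRoot lam →
      lam.re < 0 ∨
        (lam.re = 0 ∧ (A₀.charpoly.map (algebraMap ℝ ℂ)).rootMultiplicity lam = 1)) :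
    ∃ C : ℝ, ∀ t : ℝ, 0 ≤ t → ‖NormedSpace.exp (t • A₀)‖ ≤ C := by
  set M := A₀.map (algebraMap ℝ ℂ)
  have hM : M.IsMarginallyStable := by
    rwa [IsMarginallyStable, charpoly_map]
  obtain ⟨C, hC⟩ := exists_norm_le_of_forall_exists_norm_mulVec_le
    (X := fun t : Set.Ici (0 : ℝ) => exp ((t : ℂ) • M))
    fun v => (exists_norm_exp_smul_mulVec_le hM v).imp fun C hC t => hC t t.2
  refine ⟨C, fun t ht => ?_⟩
  have hmap : (exp (t • A₀)).map (algebraMap ℝ ℂ) = exp ((t : ℂ) • M) := by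
    rw [← exp_map _ Complex.continuous_ofReal, Matrix.map_smul _ _ fun a => by simp,
      RCLike.real_smul_eq_coe_smul (K := ℂ)]
    rfl
  calc ‖exp (t • A₀)‖ = ‖(exp (t • A₀)).map (algebraMap ℝ ℂ)‖ :=
        (frobenius_norm_map_eq _ _ Complex.norm_real).symm
    _ = ‖exp ((t : ℂ) • M)‖ := by rw [hmap]
    _ ≤ C := hC ⟨t, ht⟩
end

section
/- Transformed error dynamics for heterogeneous agents under output regulation (Eq. (13)): Let A be n × n, B be n × p, A₀ be m × m, X be n × m, U be p × m, K¹ be p × n real matrices with the regulation identity X * A₀ = A * X + B * U, and set K² = U − K¹ * X. Let x : ℝ → (Fin n → ℝ), x₀, ξ : ℝ → (Fin m → ℝ), v : ℝ → (Fin n → ℝ), τ : ℝ → ℝ, and define u(s) = K¹.mulVec (x s) + K².mulVec (ξ s). Fix t ∈ ℝ and suppose HasDerivAt x (A.mulVec (x t) + B.mulVec (u (t − τ t)) + v t) t and HasDerivAt x₀ (A₀.mulVec (x₀ t)) t. Then x̄ = x − X.mulVec ∘ x₀ satisfies HasDerivAt x̄ (A.mulVec (x̄ t) + (B * K¹).mulVec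 (x̄ (t − τ t)) + v t + (B * K²).mulVec (ξ (t − τ t) − x₀ (t − τ t)) − (B * U).mulVec (x₀ t − x₀ (t − τ t))) t. -/
/-!
Differentiating `x̄ = x - X x₀` gives `A x + B u(t - τ) + v - X A₀ x₀`. The regulation equation
turns `X A₀ x₀` into `A X x₀ + B U x₀`, and writing the delayed input as
`K¹ x(t - τ) + K² ξ(t - τ) = K¹ x̄(t - τ) + K² (ξ - x₀)(t - τ) + U x₀(t - τ)` (using `K² = U - K¹ X`)
leaves exactly the delay mismatch `B U (x₀(t) - x₀(t - τ))`.
-/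

open Matrix

theorem HasDerivAt.matrix_mulVec {𝕜 m n : Type*} [NontriviallyNormedField 𝕜] [Fintype n]
    (M : Matrix m n 𝕜) {f : 𝕜 → n → 𝕜} {f' : n → 𝕜} {t : 𝕜} (hf : HasDerivAt f f' t) :
    HasDerivAt (fun s => M *ᵥ f s) (M *ᵥ f') t :=
  hasDerivAt_pi.2 fun i =>
    HasDerivAt.fun_sum fun j _ => (hasDerivAt_pi.1 hf j).const_mul (M i j)

theorem regulation_error_rhs_eq {R m n p : Type*} [CommRing R]
    [Fintype m] [Fintype n] [Fintype p]
    {A : Matrix n n R} {B : Matrix n p R} {A₀ : Matrix m m R} {X : Matrix n m R}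
    {U : Matrix p m R} (hreg : X * A₀ = A * X + B * U) (K₁ : Matrix p n R)
    (xₜ xₛ w : n → R) (x₀ₜ x₀ₛ ξₛ : m → R) :
    A *ᵥ xₜ + B *ᵥ (K₁ *ᵥ xₛ + (U - K₁ * X) *ᵥ ξₛ) + w - X *ᵥ (A₀ *ᵥ x₀ₜ) =
      A *ᵥ (xₜ - X *ᵥ x₀ₜ) + (B * K₁) *ᵥ (xₛ - X *ᵥ x₀ₛ) + w
        + (B * (U - K₁ * X)) *ᵥ (ξₛ - x₀ₛ) - (B * U) *ᵥ (x₀ₜ - x₀ₛ) := by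
  rw [mulVec_mulVec, hreg]
  simp only [mulVec_add, mulVec_sub, sub_mulVec, add_mulVec, ← mulVec_mulVec]
  abel

/-- Transformed error dynamics for heterogeneous agents under output
regulation (Eq. (13)). -/
theorem transformed_error_dynamics_heterogeneous
    (n p m : ℕ)
    (A : Matrix (Fin n) (Fin n) ℝ) (B : Matrix (Fin n) (Fin p) ℝ)
    (A₀ : Matrix (Fin m) (Fin m) ℝ) (X : Matrix (Fin n) (Fin m) ℝ)
    (U : Matrix (Fin p) (Fin m) ℝ) (K₁ : Matrix (Fin p) (Fin n) ℝ)
    (hreg : X * A₀ = A * X + B * U)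
    (K₂ : Matrix (Fin p) (Fin m) ℝ) (hK₂ : K₂ = U - K₁ * X)
    (x : ℝ → (Fin n → ℝ)) (x₀ ξ : ℝ → (Fin m → ℝ)) (v : ℝ → (Fin n → ℝ))
    (τ : ℝ → ℝ)
    (u : ℝ → (Fin p → ℝ))
    (hu : ∀ s : ℝ, u s = K₁.mulVec (x s) + K₂.mulVec (ξ s))
    (t : ℝ)
    (hx : HasDerivAt x (A.mulVec (x t) + B.mulVec (u (t - τ t)) + v t) t)
    (hx₀ : HasDerivAt x₀ (A₀.mulVec (x₀ t)) t) :
    HasDerivAt (fun s => x s - X.mulVec (x₀ s))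
      (A.mulVec (x t - X.mulVec (x₀ t))
        + (B * K₁).mulVec (x (t - τ t) - X.mulVec (x₀ (t - τ t)))
        + v t
        + (B * K₂).mulVec (ξ (t - τ t) - x₀ (t - τ t))
        - (B * U).mulVec (x₀ t - x₀ (t - τ t))) t := by
  subst hK₂
  refine (hx.sub (hx₀.matrix_mulVec X)).congr_deriv ?_
  rw [hu]
  exact regulation_error_rhs_eq hreg K₁ _ _ _ _ _ _
end

section
/- Change of variables for the communication-delay-related observer (Appendix A): Let A be an n × n real matrix, ε > 0, let J be a finite index set of neighbors of agent i, with nonnegative weights a : J → ℝ and delays τ : J → ℝ with τ j ≥ 0, let ξᵢ : ℝ → (Fin n → ℝ) and ξ : J → ℝ → (Fin n → ℝ) (where for the leader index the function is the leader state x₀ satisfying its own dynamics). Fix t ∈ ℝ and suppose HasDerivAt ξᵢ (A.mulVec (ξᵢ t) + ε • ∑ j ∈ J, a j • ((Matrix.exp ((τ j) • A)).mulVec (ξ j (t − τ j)) − ξᵢ t)) t. Define w : ℝ → (Fin n → ℝ) by w(s) = (Matrix.exp (−s • A)).mulVec (ξᵢ s) and wⱼ(s) = (Matrix.exp (−s •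 A)).mulVec (ξ j s). Then HasDerivAt w (ε • ∑ j ∈ J, a j • (wⱼ (t − τ j) − w t)) t. -/
/-! Since `d/ds exp (-s • A) = -exp (-s • A) * A`, the product rule shows that multiplying by
`exp (-s • A)` cancels the drift `A *ᵥ ξᵢ` exactly, leaving `exp (-t • A)` applied to the coupling
term. Pushing `exp (-t • A)` through the sum, `exp (-t • A) * exp (τⱼ • A) = exp (-(t - τⱼ) • A)`
turns each delayed neighbour `exp (τⱼ • A) *ᵥ ξⱼ (t - τⱼ)` into `wⱼ (t - τⱼ)`. -/

open Matrix NormedSpace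

theorem hasDerivAt_exp_neg_smul_const {𝕂 𝔸 : Type*} [RCLike 𝕂] [NormedRing 𝔸] [NormedAlgebra 𝕂 𝔸]
    [CompleteSpace 𝔸] (x : 𝔸) (t : 𝕂) :
    HasDerivAt (fun s : 𝕂 => exp ((-s) • x)) (-(exp ((-t) • x) * x)) t := by
  simpa only [Function.comp_def, neg_one_smul] using
    (hasDerivAt_exp_smul_const x (-t)).scomp t (hasDerivAt_neg t)

namespace Matrix

variable {𝕜 : Type*} [RCLike 𝕜] {m n : Type*} [Fintype m] [Fintype n]

theorem exp_smul_mul_exp_smul [DecidableEq m] (A : Matrix m m 𝕜) (s u : 𝕜) :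
    exp (s • A) * exp (u • A) = exp ((s + u) • A) := by
  rw [add_smul, exp_add_of_commute]
  exact ((Commute.refl A).smul_left s).smul_right u

section linftyOp

attribute [local instance] Matrix.linftyOpNormedAddCommGroup Matrix.linftyOpNormedSpace
  Matrix.linftyOpNormedRing Matrix.linftyOpNormedAlgebra

theorem _root_.HasDerivAt.mulVec {M : 𝕜 → Matrix m n 𝕜} {M' : Matrix m n 𝕜} {v : 𝕜 → n → 𝕜}
    {v' : n → 𝕜} {t : 𝕜} (hM : HasDerivAt M M' t) (hv : HasDerivAt v v' t) :
    HasDerivAt (fun s => M s *ᵥ v s) (M t *ᵥ v' + M' *ᵥ v t) t :=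
  (mulVecBilin 𝕜 𝕜 : Matrix m n 𝕜 →ₗ[𝕜] (n → 𝕜) →ₗ[𝕜] m → 𝕜).toContinuousBilinearMap
    |>.hasDerivAt_of_bilinear (fun _ => hM) (fun _ => hv)

theorem hasDerivAt_exp_neg_smul_mulVec [DecidableEq m] {A : Matrix m m 𝕜} {ξ : 𝕜 → m → 𝕜}
    {f : m → 𝕜} {t : 𝕜} (hξ : HasDerivAt ξ (A *ᵥ ξ t + f) t) :
    HasDerivAt (fun s => exp ((-s) • A) *ᵥ ξ s) (exp ((-t) • A) *ᵥ f) t := by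
  refine ((hasDerivAt_exp_neg_smul_const A t).mulVec hξ).congr_deriv ?_
  rw [mulVec_add, neg_mulVec, ← mulVec_mulVec]
  abel

end linftyOp

end Matrix

theorem observer_change_of_variables_general
    (n : ℕ) (A : Matrix (Fin n) (Fin n) ℝ) (ε : ℝ)
    (J : Type*) [Fintype J]
    (a : J → ℝ)
    (τ : J → ℝ)
    (ξi : ℝ → (Fin n → ℝ)) (ξ : J → ℝ → (Fin n → ℝ))
    (t : ℝ)
    (hderiv : HasDerivAt ξi
      (A.mulVec (ξi t) +
        ε • ∑ j, a j •
          ((NormedSpace.exp ((τ j) • A)).mulVec (ξ j (t - τ j)) - ξi t)) t) :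
    HasDerivAt (fun s => (NormedSpace.exp ((-s) • A)).mulVec (ξi s))
      (ε • ∑ j, a j •
        ((NormedSpace.exp ((-(t - τ j)) • A)).mulVec (ξ j (t - τ j)) -
          (NormedSpace.exp ((-t) • A)).mulVec (ξi t))) t := by
  convert hasDerivAt_exp_neg_smul_mulVec hderiv using 1
  simp only [mulVec_smul, mulVec_sum, mulVec_sub, mulVec_mulVec, exp_smul_mul_exp_smul,
    neg_add_eq_sub, neg_sub]

/-- Change of variables for the communication-delay-related observer
(Appendix A): in the variables `w s = exp (-s • A) *ᵥ ξᵢ s`,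
`wⱼ s = exp (-s • A) *ᵥ ξ j s`, the observer dynamics become the delayed
consensus dynamics `w' = ε • ∑ j, a j • (wⱼ (t - τ j) - w t)`. -/
theorem observer_change_of_variables
    (n : ℕ) (A : Matrix (Fin n) (Fin n) ℝ) (ε : ℝ) (hε : 0 < ε)
    (J : Type*) [Fintype J]
    (a : J → ℝ) (ha : ∀ j, 0 ≤ a j)
    (τ : J → ℝ) (hτ : ∀ j, 0 ≤ τ j)
    (ξi : ℝ → (Fin n → ℝ)) (ξ : J → ℝ → (Fin n → ℝ))
    (t : ℝ)
    (hderiv : HasDerivAt ξi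
      (A.mulVec (ξi t) +
        ε • ∑ j, a j •
          ((NormedSpace.exp ((τ j) • A)).mulVec (ξ j (t - τ j)) - ξi t)) t) :
    HasDerivAt (fun s => (NormedSpace.exp ((-s) • A)).mulVec (ξi s))
      (ε • ∑ j, a j •
        ((NormedSpace.exp ((-(t - τ j)) • A)).mulVec (ξ j (t - τ j)) -
          (NormedSpace.exp ((-t) • A)).mulVec (ξi t))) t :=
  observer_change_of_variables_general n A ε J a τ ξi ξ t hderiv
end
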